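/- arXiv:math/0610915 — 7 statements merged into one kernel-verified Lean document; each statement's English description precedes it below -/
import Mathlib

section
/- Let M be a connected complex Lie subgroup of (ℂ*)^k. If dim_ℝ(M ∩ (S¹)^k) = 1, then M is isomorphic to ℂ^l × ℂ* or to ℂ^{l+1} for some l with 0 ≤ l ≤ (k−1)/2. -/
/-- The real-linear map taking a vector of `ℂ^k` to its coordinatewise real parts. -/
noncomputable def reMap (k : ℕ) : (Fin k → ℂ) →ₗ[ℝ] (Fin k → ℝ) :=
  LinearMap.pi fun i => Complex.reLm.comp (LinearMap.proj i)

open Module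

/-- `exp z` as a unit of `ℂ`. -/
noncomputable def expUnit (z : ℂ) : ℂˣ :=
  ⟨Complex.exp z, Complex.exp (-z), by rw [← Complex.exp_add]; simp, by
    rw [← Complex.exp_add]; simp⟩

@[simp] lemma expUnit_val (z : ℂ) : (expUnit z : ℂ) = Complex.exp z := rfl

lemma expUnit_add (z w : ℂ) : expUnit (z + w) = expUnit z * expUnit w :=
  Units.ext (by simp [Complex.exp_add])

lemma expUnit_eq_one_iff {z : ℂ} : expUnit z = 1 ↔ Complex.exp z = 1 :=
  ⟨fun h => congrArg Units.val h, fun h => Units.ext h⟩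

/-- The coordinatewise exponential homomorphism on a subspace `V`. -/
noncomputable def expHomV (k : ℕ) (V : Submodule ℂ (Fin k → ℂ)) :
    Multiplicative ↥V →* (Fin k → ℂˣ) where
  toFun v i := expUnit (((Multiplicative.toAdd v : ↥V) : Fin k → ℂ) i)
  map_one' := by
    funext i
    exact Units.ext (by simp)
  map_mul' a b := by
    funext i
    exact Units.ext (by simp [Complex.exp_add])

/-- The homomorphism `ℂ × F → ℂˣ × F` which is `exp` on the first factor. -/
noncomputable def expProdHom (F : Type*) [AddCommGroup F] :
    Multiplicative (ℂ × F) →* ℂˣ × Multiplicative F where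
  toFun x := (expUnit (Multiplicative.toAdd x).1, Multiplicative.ofAdd (Multiplicative.toAdd x).2)
  map_one' := by
    refine Prod.ext (Units.ext ?_) ?_ <;> simp
  map_mul' a b := by
    refine Prod.ext (Units.ext ?_) ?_ <;> simp [Complex.exp_add]

lemma expProdHom_surjective (F : Type*) [AddCommGroup F] :
    Function.Surjective (expProdHom F) := by
  rintro ⟨u, f⟩
  have : (u : ℂ) ∈ Set.range Complex.exp := by
    rw [Complex.range_exp]; exact u.ne_zero
  obtain ⟨z, hz⟩ := this
  exact ⟨Multiplicative.ofAdd (z, Multiplicative.toAdd f),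
    Prod.ext (Units.ext (by simpa [expProdHom] using hz)) rfl⟩

set_option maxHeartbeats 1600000 in
set_option synthInstance.maxHeartbeats 400000 in
/-- A connected complex Lie subgroup `M = exp(V)` of `(ℂ*)^k` whose
intersection with `(S¹)^k` has real dimension `1` (equivalently, `V ∩ (iℝ)^k` has real
dimension `1`) is isomorphic to `ℂ^l × ℂ*` or to `ℂ^{l+1}` with `0 ≤ l ≤ (k-1)/2`. -/
theorem stmt4 (k : ℕ) (V : Submodule ℂ (Fin k → ℂ))
    (M : Subgroup (Fin k → ℂˣ))
    (hM : ∀ gv, gv ∈ M ↔ ∃ v ∈ V, ∀ i, (gv i : ℂ) = Complex.exp (v i))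
    (htorus : Module.finrank ℝ ↥(V.restrictScalars ℝ ⊓ LinearMap.ker (reMap k)) = 1) :
    ∃ l : ℕ, 2 * l ≤ k - 1 ∧
      (Nonempty (M ≃* (Multiplicative (Fin l → ℂ) × ℂˣ)) ∨
       Nonempty (M ≃* Multiplicative (Fin (l + 1) → ℂ))) := by
  classical
  set n := Module.finrank ℂ ↥V with hn
  set φ := expHomV k V with hφ
  -- M is the range of φ
  have hMrange : M = φ.range := by
    ext g
    rw [hM, MonoidHom.mem_range]
    constructor
    · rintro ⟨v, hvV, hvi⟩
      refine ⟨Multiplicative.ofAdd (⟨v, hvV⟩ : ↥V), ?_⟩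
      funext i
      exact Units.ext (hvi i).symm
    · rintro ⟨v, rfl⟩
      exact ⟨(Multiplicative.toAdd v : ↥V), (Multiplicative.toAdd v).2, fun i => rfl⟩
  -- kernel membership characterization
  have hker1 : ∀ v : Multiplicative ↥V,
      φ v = 1 ↔ ∀ i, Complex.exp (((Multiplicative.toAdd v : ↥V) : Fin k → ℂ) i) = 1 := by
    intro v
    constructor
    · intro h i
      exact congrArg Units.val (congrFun h i)
    · intro h
      funext i
      exact Units.ext (h i)
  -- the generator of the 1-dimensional intersection
  obtain ⟨w0, hw0ne, hw0span⟩ := finrank_eq_one_iff'.mp htorus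
  have hw0V : (w0 : Fin k → ℂ) ∈ V := (Submodule.mem_inf.mp w0.2).1
  have hwv0 : (w0 : Fin k → ℂ) ≠ 0 := fun h => hw0ne (Subtype.ext h)
  -- the additive subgroup of kernel vectors
  let Kadd : AddSubgroup (Fin k → ℂ) :=
    { carrier := {x | x ∈ V ∧ ∀ i, Complex.exp (x i) = 1}
      add_mem' := fun {x y} hx hy => ⟨V.add_mem hx.1 hy.1, fun i => by
        simp only [Pi.add_apply, Complex.exp_add, hx.2 i, hy.2 i, mul_one]⟩
      zero_mem' := ⟨V.zero_mem, fun i => by simp⟩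
      neg_mem' := fun {x} hx => ⟨V.neg_mem hx.1, fun i => by
        simp only [Pi.neg_apply, Complex.exp_neg, hx.2 i, inv_one]⟩ }
  have hKnorm : ∀ x ∈ Kadd, x ≠ 0 → 2 * Real.pi ≤ ‖x‖ := by
    rintro x ⟨hxV, hx⟩ hne
    obtain ⟨i, hi⟩ : ∃ i, x i ≠ 0 := by
      by_contra h
      push_neg at h
      exact hne (funext h)
    obtain ⟨s, hs⟩ := Complex.exp_eq_one_iff.mp (hx i)
    have hs0 : s ≠ 0 := by
      rintro rfl
      simp only [Int.cast_zero, zero_mul] at hs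
      exact hi hs
    have h1 : x i = ((s * (2 * Real.pi) : ℝ) : ℂ) * Complex.I := by
      rw [hs]; push_cast; ring
    have habs : (1:ℝ) ≤ |(s:ℝ)| := by
      rw [← Int.cast_abs]
      exact_mod_cast Int.one_le_abs hs0
    have h2 : (2 * Real.pi) ≤ ‖x i‖ := by
      rw [h1, norm_mul, Complex.norm_real, Complex.norm_I, mul_one, Real.norm_eq_abs, abs_mul,
        abs_of_pos (by positivity : (0:ℝ) < 2 * Real.pi)]
      nlinarith [Real.pi_pos]
    exact h2.trans (norm_le_pi_norm x i)
  -- the subgroup of multiples of `w0` lying in `Kadd`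
  let S : AddSubgroup ℝ := Kadd.comap
    (LinearMap.toSpanSingleton ℝ (Fin k → ℂ) (w0 : Fin k → ℂ)).toAddMonoidHom
  have hSmem : ∀ c : ℝ, c ∈ S ↔ c • (w0 : Fin k → ℂ) ∈ Kadd := fun c => Iff.rfl
  have hline : ∀ x, x ∈ Kadd → ∃ c : ℝ, c ∈ S ∧ x = c • (w0 : Fin k → ℂ) := by
    rintro x ⟨hxV, hx⟩
    have hxW : x ∈ V.restrictScalars ℝ ⊓ LinearMap.ker (reMap k) := by
      refine Submodule.mem_inf.mpr ⟨hxV, ?_⟩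
      rw [LinearMap.mem_ker]
      funext i
      obtain ⟨s, hs⟩ := Complex.exp_eq_one_iff.mp (hx i)
      show (x i).re = 0
      rw [hs]
      simp
    obtain ⟨c, hc⟩ := hw0span ⟨x, hxW⟩
    have hcx : x = c • (w0 : Fin k → ℂ) := by
      have h := congrArg Subtype.val hc
      simpa using h.symm
    refine ⟨c, ?_, hcx⟩
    rw [hSmem, ← hcx]
    exact ⟨hxV, hx⟩
  -- dimension bound : 2 * n ≤ k + 1
  have hdim : 2 * n ≤ k + 1 := by
    have h1 : finrank ℝ ↥(V.restrictScalars ℝ) = 2 * n := by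
      rw [hn, ← finrank_real_of_complex ↥V]
      exact ((Submodule.restrictScalarsEquiv ℝ ℂ (Fin k → ℂ) V).restrictScalars ℝ).finrank_eq
    have h2 := LinearMap.finrank_range_add_finrank_ker ((reMap k).domRestrict (V.restrictScalars ℝ))
    have h3 : LinearMap.ker ((reMap k).domRestrict (V.restrictScalars ℝ))
        = Submodule.comap (V.restrictScalars ℝ).subtype
            (V.restrictScalars ℝ ⊓ LinearMap.ker (reMap k)) := by
      rw [LinearMap.ker_domRestrict, Submodule.comap_inf, Submodule.comap_subtype_self, top_inf_eq]
    have h4 : finrank ℝ ↥(LinearMap.ker ((reMap k).domRestrict (V.restrictScalars ℝ))) = 1 := by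
      rw [h3, (Submodule.comapSubtypeEquivOfLe inf_le_left).finrank_eq]
      exact htorus
    have h5 : finrank ℝ ↥(LinearMap.range ((reMap k).domRestrict (V.restrictScalars ℝ))) ≤ k :=
      (Submodule.finrank_le _).trans (le_of_eq (Module.finrank_fin_fun ℝ))
    rw [h1, h4] at h2
    omega
  have hn1 : 1 ≤ n := by
    have : Nontrivial ↥V :=
      ⟨⟨⟨(w0 : Fin k → ℂ), hw0V⟩, 0, by simp [Subtype.ext_iff, hwv0]⟩⟩
    rw [hn]
    exact Module.finrank_pos
  -- dichotomy for S
  rcases S.dense_or_cyclic with hd | ⟨a, ha⟩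
  · exfalso
    have hnorm0 : (0:ℝ) < ‖(w0 : Fin k → ℂ)‖ := norm_pos_iff.mpr hwv0
    set ε := (2 * Real.pi) / ‖(w0 : Fin k → ℂ)‖ with hε
    have hεpos : 0 < ε := by positivity
    obtain ⟨c, hcS, hcd⟩ := Metric.mem_closure_iff.mp (hd (ε/2)) (ε/2) (by positivity)
    rw [Real.dist_eq, abs_sub_lt_iff] at hcd
    have hcpos : 0 < c := by linarith [hcd.1]
    have hclt : c < ε := by linarith [hcd.2]
    have hK := (hSmem c).mp hcS
    have hge := hKnorm _ hK (smul_ne_zero (ne_of_gt hcpos) hwv0)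
    rw [norm_smul, Real.norm_eq_abs, abs_of_pos hcpos] at hge
    have hlt : c * ‖(w0 : Fin k → ℂ)‖ < ε * ‖(w0 : Fin k → ℂ)‖ :=
      mul_lt_mul_of_pos_right hclt hnorm0
    rw [hε, div_mul_cancel₀ _ (ne_of_gt hnorm0)] at hlt
    linarith
  by_cases ha0 : a = 0
  · -- trivial kernel : M ≅ ℂ^n
    subst ha0
    have hinj : Function.Injective φ := by
      refine (injective_iff_map_eq_one φ).mpr fun v hv => ?_
      obtain ⟨c, hcS, hcx⟩ := hline _ ⟨(Multiplicative.toAdd v : ↥V).2, (hker1 v).mp hv⟩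
      rw [ha, AddSubgroup.closure_singleton_zero, AddSubgroup.mem_bot] at hcS
      subst hcS
      have h0 : (Multiplicative.toAdd v : ↥V) = 0 := Subtype.ext (by simpa using hcx)
      have : v = Multiplicative.ofAdd 0 := by
        rw [← h0]
        rfl
      simpa using this
    refine ⟨n - 1, by omega, Or.inr ?_⟩
    have hnl : n - 1 + 1 = n := by omega
    rw [hnl]
    have e1 : M ≃* φ.range := MulEquiv.subgroupCongr hMrange
    have e2 : Multiplicative ↥V ≃* φ.range := MonoidHom.ofInjective hinj
    have e3 : ↥V ≃+ (Fin n → ℂ) := (Module.finBasis ℂ ↥V).equivFun.toAddEquiv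
    exact ⟨(e1.trans e2.symm).trans (AddEquiv.toMultiplicative e3)⟩
  · -- nontrivial kernel : M ≅ ℂ^l × ℂ*
    have haS : a ∈ S := by rw [ha]; exact AddSubgroup.mem_closure_singleton_self a
    have hzK : a • (w0 : Fin k → ℂ) ∈ Kadd := (hSmem a).mp haS
    set z : Fin k → ℂ := a • (w0 : Fin k → ℂ) with hzdef
    have hzV : z ∈ V := hzK.1
    have hz0 : z ≠ 0 := smul_ne_zero ha0 hwv0
    set c2 : ℂ := 2 * Real.pi * Complex.I with hc2
    have hc2ne : c2 ≠ 0 := Complex.two_pi_I_ne_zero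
    have hmVmem : c2⁻¹ • z ∈ V := V.smul_mem _ hzV
    set mV : ↥V := ⟨c2⁻¹ • z, hmVmem⟩ with hmVdef
    have hmV0 : mV ≠ 0 := by
      simp only [hmVdef, Ne, Subtype.ext_iff]
      exact smul_ne_zero (inv_ne_zero hc2ne) hz0
    set zV : ↥V := ⟨z, hzV⟩ with hzVdef
    have hc2mV : c2 • mV = zV := Subtype.ext (smul_inv_smul₀ hc2ne z)
    obtain ⟨q, hq⟩ := Submodule.exists_isCompl (ℂ ∙ mV)
    haveI : Module.Free ℂ ↥q := Module.Free.of_divisionRing ℂ ↥q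
    haveI : Module.Finite ℂ ↥q := Module.Finite.of_injective q.subtype q.injective_subtype
    set l := finrank ℂ ↥q with hl
    set e0 : (ℂ × (Fin l → ℂ)) ≃ₗ[ℂ] ↥V :=
      ((LinearEquiv.toSpanNonzeroSingleton ℂ ↥V mV hmV0).prodCongr
          (Module.finBasis ℂ ↥q).equivFun.symm).trans
        (Submodule.prodEquivOfIsCompl _ q hq) with he0
    set L : ↥V ≃ₗ[ℂ] ℂ × (Fin l → ℂ) := e0.symm with hLdef
    have hLmV : L mV = (1, 0) := by
      rw [hLdef, LinearEquiv.symm_apply_eq, he0]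
      simp [Submodule.coe_prodEquivOfIsCompl', LinearEquiv.prodCongr_apply]
    set ψ : Multiplicative ↥V →* ℂˣ × Multiplicative (Fin l → ℂ) :=
      (expProdHom (Fin l → ℂ)).comp (AddEquiv.toMultiplicative L.toAddEquiv).toMonoidHom with hψ
    have hψsurj : Function.Surjective ψ :=
      (expProdHom_surjective _).comp (AddEquiv.toMultiplicative L.toAddEquiv).surjective
    have hψapp : ∀ v : Multiplicative ↥V,
        ψ v = (expUnit ((L (Multiplicative.toAdd v)).1),
               Multiplicative.ofAdd ((L (Multiplicative.toAdd v)).2)) := fun v => rfl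
    have hLz : ∀ s : ℤ, L (s • zV) = (s • c2, 0) := by
      intro s
      rw [map_zsmul, ← hc2mV, map_smul, hLmV]
      refine Prod.ext ?_ ?_ <;> simp [Prod.smul_def, smul_eq_mul]
    have hkerψ : ∀ v, ψ v = 1 ↔ ∃ s : ℤ, Multiplicative.toAdd v = s • zV := by
      intro v
      rw [hψapp v, Prod.ext_iff]
      constructor
      · rintro ⟨h1, h2⟩
        have h1' : Complex.exp ((L (Multiplicative.toAdd v)).1) = 1 := congrArg Units.val h1
        obtain ⟨s, hs⟩ := Complex.exp_eq_one_iff.mp h1'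
        have h2' : (L (Multiplicative.toAdd v)).2 = 0 := by
          simpa using h2
        refine ⟨s, L.injective ?_⟩
        rw [hLz s]
        refine Prod.ext ?_ ?_
        · simpa [zsmul_eq_mul, hc2] using hs
        · simpa using h2'
      · rintro ⟨s, hs⟩
        rw [hs, hLz s]
        constructor
        · show expUnit ((s : ℤ) • c2) = 1
          refine expUnit_eq_one_iff.mpr ?_
          rw [zsmul_eq_mul, hc2]
          exact_mod_cast Complex.exp_int_mul_two_pi_mul_I s
        · rfl
    have hkerφ : ∀ v, φ v = 1 ↔ ∃ s : ℤ, Multiplicative.toAdd v = s • zV := by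
      intro v
      rw [hker1]
      constructor
      · intro h
        obtain ⟨c, hcS, hcx⟩ := hline _ ⟨(Multiplicative.toAdd v : ↥V).2, h⟩
        rw [ha] at hcS
        obtain ⟨s, hsc⟩ := AddSubgroup.mem_closure_singleton.mp hcS
        refine ⟨s, Subtype.ext ?_⟩
        have hcoe : ((s • zV : ↥V) : Fin k → ℂ) = s • z := by
          simp [hzVdef]
        rw [hcoe, hcx, ← hsc, hzdef]
        rw [zsmul_eq_mul, mul_smul, Int.cast_smul_eq_zsmul]
      · rintro ⟨s, hs⟩ i
        have hx : ((Multiplicative.toAdd v : ↥V) : Fin k → ℂ) ∈ Kadd := by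
          have hcoe : ((Multiplicative.toAdd v : ↥V) : Fin k → ℂ) = s • z := by
            rw [hs]; simp [hzVdef]
          rw [hcoe]
          exact AddSubgroup.zsmul_mem _ hzK s
        exact hx.2 i
    have hkk : MonoidHom.ker φ = MonoidHom.ker ψ := by
      ext v
      simp only [MonoidHom.mem_ker, hkerφ v, hkerψ v]
    have hln : 1 + l = n := by
      have h := Submodule.finrank_add_eq_of_isCompl hq
      rwa [finrank_span_singleton hmV0] at h
    refine ⟨l, by omega, Or.inl ?_⟩
    refine ⟨?_⟩
    exact (((MulEquiv.subgroupCongr hMrange).trans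
        (QuotientGroup.quotientKerEquivRange φ).symm).trans
      ((QuotientGroup.quotientMulEquivOfEq hkk).trans
        (QuotientGroup.quotientKerEquivOfSurjective ψ hψsurj))).trans MulEquiv.prodComm
end

section
/- If β : ℂ^l → (ℂ*)^k is an injective Lie group morphism such that the image of β intersects (S¹)^k in a set of real dimension 0, then l ≤ k/2. -/
/-! The real-linear map `z ↦ (Re (B z i))ᵢ` is injective: its kernel consists of the `z` with
`B z` purely imaginary, hence `B z = 0`, hence `z = 0`. Comparing real dimensions gives
`2 l ≤ k`. -/

open Module

theorem LinearMap.injective_of_injective_exp_comp {V ι : Type*} [AddCommGroup V] [Module ℂ V]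
    (B : V →ₗ[ℂ] (ι → ℂ)) (hinj : Function.Injective fun z i => Complex.exp (B z i)) :
    Function.Injective B :=
  fun z w h => hinj (by simp only [h])

theorem LinearMap.injective_re_comp {V ι : Type*} [AddCommGroup V] [Module ℂ V]
    (B : V →ₗ[ℂ] (ι → ℂ)) (hB : Function.Injective B)
    (himag : ∀ z, (∀ i, (B z i).re = 0) → B z = 0) :
    Function.Injective (LinearMap.piMap (fun _ : ι => Complex.reLm) ∘ₗ B.restrictScalars ℝ) := by
  rw [← LinearMap.ker_eq_bot, LinearMap.ker_eq_bot']
  intro z hz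
  have hre : ∀ i, (B z i).re = 0 := fun i => congrFun hz i
  exact hB (by rw [himag z hre, map_zero])

theorem LinearMap.two_mul_finrank_le_card {V ι : Type*} [AddCommGroup V] [Module ℂ V]
    [FiniteDimensional ℂ V] [Fintype ι] (B : V →ₗ[ℂ] (ι → ℂ)) (hB : Function.Injective B)
    (himag : ∀ z, (∀ i, (B z i).re = 0) → B z = 0) :
    2 * finrank ℂ V ≤ Fintype.card ι := by
  rw [← finrank_real_of_complex, ← finrank_fintype_fun_eq_card ℝ]
  exact LinearMap.finrank_le_finrank_of_injective (B.injective_re_comp hB himag)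

/-- If `β = exp ∘ B : ℂ^l → (ℂ*)^k` is an injective Lie group morphism
(`B` being the ℂ-linear differential) whose image meets `(S¹)^k` in real dimension `0`
(equivalently `B(ℂ^l) ∩ (iℝ)^k = 0`), then `l ≤ k/2`. -/
theorem stmt5 (l k : ℕ) (B : (Fin l → ℂ) →ₗ[ℂ] (Fin k → ℂ))
    (hinj : Function.Injective (fun z : Fin l → ℂ => fun i : Fin k => Complex.exp (B z i)))
    (htorus : ∀ z : Fin l → ℂ, (∀ i, (B z i).re = 0) → B z = 0) :
    2 * l ≤ k := by
  simpa using B.two_mul_finrank_le_card (B.injective_of_injective_exp_comp hinj) htorus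
end

section
/- Let M be a complex subgroup of (ℂ*)^{2k} isomorphic to ℂ^k with dim_ℝ(M ∩ (S¹)^{2k}) = 0. Then the Zariski closure of M equals (ℂ*)^{2k}. -/
/-!
The real-part map `V → ℝ^{2k}` is injective because `V` meets `(iℝ)^{2k}` trivially, hence
bijective by a dimension count. So a real linear form `v ↦ ∑ nᵢ vᵢ` vanishing on `V` is zero;
applied to `n = m - m'`, distinct monomials `x^m` restrict to distinct characters
`v ↦ exp (∑ mᵢ vᵢ)` of the additive group `V`. A polynomial vanishing on `exp V` is a linear
relation between these characters, so all its coefficients vanish by Dedekind's independence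
of characters.
-/

open Complex

variable {ι : Type*}

noncomputable def coordRe (V : Submodule ℂ (ι → ℂ)) : V →ₗ[ℝ] ι → ℝ :=
  LinearMap.pi fun i => reLm ∘ₗ (LinearMap.proj i ∘ₗ V.subtype).restrictScalars ℝ

@[simp]
theorem coordRe_apply (V : Submodule ℂ (ι → ℂ)) (v : V) (i : ι) :
    coordRe V v i = (v.1 i).re :=
  rfl

theorem coordRe_surjective [Fintype ι] {V : Submodule ℂ (ι → ℂ)}
    (hcard : Fintype.card ι = 2 * Module.finrank ℂ V)
    (htorus : ∀ v ∈ V, (∀ i, (v i).re = 0) → v = 0) :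
    Function.Surjective (coordRe V) := by
  refine (LinearMap.injective_iff_surjective_of_finrank_eq_finrank ?_).mp ?_
  · rw [finrank_real_of_complex, Module.finrank_fintype_fun_eq_card, hcard]
  · rw [← LinearMap.ker_eq_bot, Submodule.eq_bot_iff]
    intro v hv
    exact Subtype.ext (htorus v v.2 fun i => congrFun hv i)

theorem eq_zero_of_forall_sum_ofReal_mul_eq_zero [Fintype ι] {V : Submodule ℂ (ι → ℂ)}
    (hcard : Fintype.card ι = 2 * Module.finrank ℂ V)
    (htorus : ∀ v ∈ V, (∀ i, (v i).re = 0) → v = 0)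
    {n : ι → ℝ} (hn : ∀ v ∈ V, ∑ i, (n i : ℂ) * v i = 0) : n = 0 := by
  classical
  funext j
  obtain ⟨v, hv⟩ := coordRe_surjective hcard htorus (Pi.single j 1)
  have hre := congrArg re (hn v v.2)
  simp only [re_sum, re_ofReal_mul, zero_re] at hre
  simpa [← coordRe_apply, hv, Pi.single_apply] using hre

theorem LinearMap.eq_zero_of_forall_exp_eq_one {E : Type*} [AddCommGroup E] [Module ℂ E]
    (f : E →ₗ[ℂ] ℂ) (h : ∀ v, exp (f v) = 1) : f = 0 := by
  ext v
  by_contra hv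
  have := h ((Real.pi * I / f v) • v)
  rw [map_smul, smul_eq_mul, div_mul_cancel₀ _ hv, exp_pi_mul_I] at this
  norm_num at this

section

variable [Fintype ι]

noncomputable def exponentForm (m : ι →₀ ℕ) : (ι → ℂ) →ₗ[ℂ] ℂ :=
  ∑ i, (m i : ℂ) • LinearMap.proj i

theorem exponentForm_apply (m : ι →₀ ℕ) (v : ι → ℂ) :
    exponentForm m v = ∑ i, (m i : ℂ) * v i := by
  simp [exponentForm]

noncomputable def expChar (V : Submodule ℂ (ι → ℂ)) (m : ι →₀ ℕ) : Multiplicative V →* ℂ :=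
  expMonoidHom.comp
    (AddMonoidHom.toMultiplicative ((exponentForm m).comp V.subtype).toAddMonoidHom)

theorem expChar_apply (V : Submodule ℂ (ι → ℂ)) (m : ι →₀ ℕ) (v : Multiplicative V) :
    expChar V m v = exp (exponentForm m (Multiplicative.toAdd v).1) :=
  rfl

theorem expChar_injective {V : Submodule ℂ (ι → ℂ)}
    (hcard : Fintype.card ι = 2 * Module.finrank ℂ V)
    (htorus : ∀ v ∈ V, (∀ i, (v i).re = 0) → v = 0) :
    Function.Injective (expChar V) := by
  intro m m' h
  have hform : (exponentForm m - exponentForm m') ∘ₗ V.subtype = 0 := by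
    refine LinearMap.eq_zero_of_forall_exp_eq_one _ fun v => ?_
    have hv := DFunLike.congr_fun h (Multiplicative.ofAdd v)
    rw [expChar_apply, expChar_apply, toAdd_ofAdd] at hv
    simp [exp_sub, hv]
  have hn : (fun i => (m i : ℝ) - m' i) = 0 := by
    refine eq_zero_of_forall_sum_ofReal_mul_eq_zero hcard htorus fun v hv => ?_
    have := LinearMap.congr_fun hform ⟨v, hv⟩
    simp only [LinearMap.comp_apply, LinearMap.sub_apply, Submodule.subtype_apply,
      exponentForm_apply, LinearMap.zero_apply, sub_eq_zero] at this
    simp [sub_mul, Finset.sum_sub_distrib, this]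
  ext i
  exact_mod_cast sub_eq_zero.mp (congrFun hn i)

theorem MvPolynomial.eval_exp_eq_sum (p : MvPolynomial ι ℂ) (v : ι → ℂ) :
    eval (fun i => exp (v i)) p = ∑ m ∈ p.support, p.coeff m * exp (exponentForm m v) := by
  simp only [eval_eq', exponentForm_apply, exp_sum, exp_nat_mul]

end

theorem stmt6_general (k : ℕ) (V : Submodule ℂ (Fin (2 * k) → ℂ))
    (hdim : Module.finrank ℂ V = k)
    (htorus : ∀ v ∈ V, (∀ i, (v i).re = 0) → v = 0)
    (p : MvPolynomial (Fin (2 * k)) ℂ)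
    (hvanish : ∀ v ∈ V, MvPolynomial.eval (fun i => Complex.exp (v i)) p = 0) :
    ∀ x : Fin (2 * k) → ℂ, (∀ i, x i ≠ 0) → MvPolynomial.eval x p = 0 := by
  have hcard : Fintype.card (Fin (2 * k)) = 2 * Module.finrank ℂ V := by simp [hdim]
  suffices hp : p = 0 by intro x _; simp [hp]
  have hrel : ∑ m ∈ p.support, p.coeff m • ⇑(expChar V m) = 0 := by
    funext v
    simpa [expChar_apply, MvPolynomial.eval_exp_eq_sum] using
      hvanish _ (Multiplicative.toAdd v).2
  have hindep := (linearIndependent_monoidHom (Multiplicative V) ℂ).comp _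
    (expChar_injective hcard htorus)
  ext m
  by_cases hm : m ∈ p.support
  · exact linearIndependent_iff'.mp hindep _ _ hrel m hm
  · exact MvPolynomial.notMem_support_iff.mp hm

/-- Let `M = exp(V)` be a complex subgroup of `(ℂ*)^{2k}` isomorphic to `ℂ^k`
(`V` a `k`-dimensional complex subspace of the Lie algebra on which `exp` is injective)
with `dim_ℝ(M ∩ (S¹)^{2k}) = 0` (equivalently `V ∩ (iℝ)^{2k} = 0`). Then the Zariski
closure of `M` is all of `(ℂ*)^{2k}`: every polynomial vanishing on `M` vanishes on the
whole torus. -/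
theorem stmt6 (k : ℕ) (V : Submodule ℂ (Fin (2 * k) → ℂ))
    (hdim : Module.finrank ℂ V = k)
    (hinj : Set.InjOn (fun v : Fin (2 * k) → ℂ => fun i => Complex.exp (v i)) V)
    (htorus : ∀ v ∈ V, (∀ i, (v i).re = 0) → v = 0)
    (p : MvPolynomial (Fin (2 * k)) ℂ)
    (hvanish : ∀ v ∈ V, MvPolynomial.eval (fun i => Complex.exp (v i)) p = 0) :
    ∀ x : Fin (2 * k) → ℂ, (∀ i, x i ≠ 0) → MvPolynomial.eval x p = 0 :=
  stmt6_general k V hdim htorus p hvanish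
end

section
/- Let M be a complex subgroup of (ℂ*)^{2k+1} isomorphic to ℂ^{k+1} with dim_ℝ(M ∩ (S¹)^{2k+1}) = 1. Then the Zariski closure of M equals (ℂ*)^{2k+1}. -/
open Complex Module

lemma stmt7_dim_lemma (k : ℕ) (V : Submodule ℂ (Fin (2 * k + 1) → ℂ))
    (hdim : Module.finrank ℂ V = k + 1)
    (htorus : Module.finrank ℝ
      ↥(V.restrictScalars ℝ ⊓ LinearMap.ker (reMap (2 * k + 1))) = 1)
    (c : Fin (2 * k + 1) → ℝ) (hc : c ≠ 0)
    (hann : ∀ v ∈ V, ∑ i, (c i : ℂ) * v i = 0) : False := by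
  classical
  let φ : (Fin (2*k+1) → ℂ) →ₗ[ℂ] ℂ := ∑ i, (c i : ℂ) • LinearMap.proj i
  have hφ : ∀ v, φ v = ∑ i, (c i : ℂ) * v i := by
    intro v
    simp [φ, LinearMap.sum_apply, smul_eq_mul]
  obtain ⟨j, hj⟩ := Function.ne_iff.mp hc
  have hcj : (c j : ℂ) ≠ 0 := by exact_mod_cast hj
  have hφsurj : Function.Surjective φ := by
    intro z
    refine ⟨Pi.single j (z / (c j : ℂ)), ?_⟩
    rw [hφ, Finset.sum_eq_single j]
    · rw [Pi.single_eq_same, mul_div_cancel₀ _ hcj]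
    · intro b _ hb
      rw [Pi.single_eq_of_ne hb, mul_zero]
    · simp
  have hkerC : finrank ℂ (LinearMap.ker φ) = 2 * k := by
    have h1 := LinearMap.finrank_range_add_finrank_ker φ
    rw [LinearMap.range_eq_top.mpr hφsurj, finrank_top, finrank_self,
      Module.finrank_fintype_fun_eq_card] at h1
    simp only [Fintype.card_fin] at h1
    omega
  have hkerR : finrank ℝ ↥((LinearMap.ker φ).restrictScalars ℝ) = 2 * (2 * k) := by
    have h2 : finrank ℝ ℂ * finrank ℂ ↥(LinearMap.ker φ) = finrank ℝ ↥(LinearMap.ker φ) :=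
      Module.finrank_mul_finrank ℝ ℂ ↥(LinearMap.ker φ)
    rw [Complex.finrank_real_complex, hkerC] at h2
    exact h2.symm
  -- real functional
  let ψ : (Fin (2*k+1) → ℝ) →ₗ[ℝ] ℝ := ∑ i, (c i) • LinearMap.proj i
  have hψ : ∀ u, ψ u = ∑ i, c i * u i := by
    intro u
    simp [ψ, LinearMap.sum_apply, smul_eq_mul]
  have hψsurj : Function.Surjective ψ := by
    intro z
    refine ⟨Pi.single j (z / c j), ?_⟩
    rw [hψ, Finset.sum_eq_single j]
    · rw [Pi.single_eq_same, mul_div_cancel₀ _ hj]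
    · intro b _ hb
      rw [Pi.single_eq_of_ne hb, mul_zero]
    · simp
  have hkerψ : finrank ℝ (LinearMap.ker ψ) = 2 * k := by
    have h1 := LinearMap.finrank_range_add_finrank_ker ψ
    rw [LinearMap.range_eq_top.mpr hψsurj, finrank_top, finrank_self,
      Module.finrank_fintype_fun_eq_card] at h1
    simp only [Fintype.card_fin] at h1
    omega
  -- the map u ↦ i·u
  let jm : (Fin (2*k+1) → ℝ) →ₗ[ℝ] (Fin (2*k+1) → ℂ) :=
    LinearMap.pi fun i => (LinearMap.toSpanSingleton ℝ ℂ Complex.I).comp (LinearMap.proj i)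
  have hjm : ∀ u i, jm u i = (u i : ℂ) * Complex.I := by
    intro u i
    simp [jm, LinearMap.toSpanSingleton_apply, Complex.real_smul]
  have hjinj : Function.Injective jm := by
    intro u u' h
    funext i
    have := congrFun h i
    rw [hjm, hjm] at this
    have h2 : (u i : ℂ) = (u' i : ℂ) := mul_right_cancel₀ Complex.I_ne_zero this
    exact_mod_cast h2
  set S0 : Submodule ℝ (Fin (2*k+1) → ℂ) :=
    LinearMap.ker (reMap (2*k+1)) ⊓ (LinearMap.ker φ).restrictScalars ℝ with hS0
  have hmaple : Submodule.map jm (LinearMap.ker ψ) ≤ S0 := by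
    rintro x ⟨u, hu, rfl⟩
    rw [SetLike.mem_coe, LinearMap.mem_ker, hψ] at hu
    refine Submodule.mem_inf.mpr ⟨?_, ?_⟩
    · rw [LinearMap.mem_ker]
      funext i
      simp [reMap, hjm]
    · rw [Submodule.restrictScalars_mem, LinearMap.mem_ker, hφ]
      have : ∀ i, (c i : ℂ) * jm u i = ((c i * u i : ℝ) : ℂ) * Complex.I := by
        intro i
        rw [hjm]
        push_cast
        ring
      rw [Finset.sum_congr rfl fun i _ => this i, ← Finset.sum_mul, ← Complex.ofReal_sum, hu]
      simp
  have hS0big : 2 * k ≤ finrank ℝ S0 := by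
    have := LinearEquiv.finrank_eq (Submodule.equivMapOfInjective jm hjinj (LinearMap.ker ψ))
    rw [hkerψ] at this
    exact le_of_eq this |>.trans (Submodule.finrank_mono hmaple)
  have hVR : finrank ℝ ↥(V.restrictScalars ℝ) = 2 * (k + 1) := by
    have h2 : finrank ℝ ℂ * finrank ℂ ↥V = finrank ℝ ↥V :=
      Module.finrank_mul_finrank ℝ ℂ ↥V
    rw [Complex.finrank_real_complex, hdim] at h2
    exact h2.symm
  have hVle : V.restrictScalars ℝ ≤ (LinearMap.ker φ).restrictScalars ℝ := by
    intro v hv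
    rw [Submodule.restrictScalars_mem, LinearMap.mem_ker, hφ]
    exact hann v hv
  have hsuple : V.restrictScalars ℝ ⊔ S0 ≤ (LinearMap.ker φ).restrictScalars ℝ :=
    sup_le hVle inf_le_right
  have hsup : finrank ℝ ↥(V.restrictScalars ℝ ⊔ S0) ≤ 2 * (2 * k) := by
    rw [← hkerR]
    exact Submodule.finrank_mono hsuple
  have hinfle : V.restrictScalars ℝ ⊓ S0 ≤ V.restrictScalars ℝ ⊓ LinearMap.ker (reMap (2*k+1)) :=
    inf_le_inf_left _ inf_le_left
  have hinf : finrank ℝ ↥(V.restrictScalars ℝ ⊓ S0) ≤ 1 := by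
    exact le_trans (Submodule.finrank_mono hinfle) (le_of_eq htorus)
  have heq := Submodule.finrank_sup_add_finrank_inf_eq (V.restrictScalars ℝ) S0
  rw [hVR] at heq
  omega

/-- Let `M = exp(V)` be a complex subgroup of `(ℂ*)^{2k+1}` isomorphic to
`ℂ^{k+1}` (`V` a `(k+1)`-dimensional complex subspace on which `exp` is injective) with
`dim_ℝ(M ∩ (S¹)^{2k+1}) = 1` (equivalently `dim_ℝ (V ∩ (iℝ)^{2k+1}) = 1`). Then the
Zariski closure of `M` equals `(ℂ*)^{2k+1}`. -/

theorem stmt7 (k : ℕ) (V : Submodule ℂ (Fin (2 * k + 1) → ℂ))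
    (hdim : Module.finrank ℂ V = k + 1)
    (hinj : Set.InjOn (fun v : Fin (2 * k + 1) → ℂ => fun i => Complex.exp (v i)) V)
    (htorus : Module.finrank ℝ
      ↥(V.restrictScalars ℝ ⊓ LinearMap.ker (reMap (2 * k + 1))) = 1)
    (p : MvPolynomial (Fin (2 * k + 1)) ℂ)
    (hvanish : ∀ v ∈ V, MvPolynomial.eval (fun i => Complex.exp (v i)) p = 0) :
    ∀ x : Fin (2 * k + 1) → ℂ, (∀ i, x i ≠ 0) → MvPolynomial.eval x p = 0 := by
  classical
  let L : (Fin (2 * k + 1) →₀ ℕ) → ↥V → ℂ :=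
    fun m v => ∑ i, (m i : ℂ) * (v : Fin (2 * k + 1) → ℂ) i
  have hLadd : ∀ m (a b : ↥V), L m (a + b) = L m a + L m b := by
    intro m a b
    simp [L, mul_add, Finset.sum_add_distrib]
  have hLsmul : ∀ m (t : ℂ) (a : ↥V), L m (t • a) = t * L m a := by
    intro m t a
    simp only [L, Submodule.coe_smul, Pi.smul_apply, smul_eq_mul, Finset.mul_sum]
    exact Finset.sum_congr rfl fun i _ => by ring
  let χ : (Fin (2 * k + 1) →₀ ℕ) → (Multiplicative ↥V →* ℂ) := fun m =>
    { toFun := fun w => Complex.exp (L m w.toAdd)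
      map_one' := by simp [L]
      map_mul' := by intro a b; simp only [toAdd_mul, hLadd, Complex.exp_add] }
  have hχinj : ∀ m ∈ p.support, ∀ m' ∈ p.support, χ m = χ m' → m = m' := by
    intro m _ m' _ h
    by_contra hne
    have hexp : ∀ v : ↥V, Complex.exp (L m v - L m' v) = 1 := by
      intro v
      have h2 := DFunLike.congr_fun h (Multiplicative.ofAdd v)
      simp only [χ, MonoidHom.coe_mk, OneHom.coe_mk, toAdd_ofAdd] at h2
      rw [Complex.exp_sub, h2, div_self (Complex.exp_ne_zero _)]
    have hzero : ∀ v : ↥V, L m v - L m' v = 0 := by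
      intro v
      by_contra h0
      obtain ⟨a, ha⟩ := Complex.exp_eq_one_iff.mp (hexp v)
      have ha0 : a ≠ 0 := by
        rintro rfl
        simp only [Int.cast_zero, zero_mul] at ha
        exact h0 ha
      have h3 := hexp (((1 / (2 * (a : ℝ))) : ℂ) • v)
      rw [hLsmul, hLsmul, ← mul_sub, ha] at h3
      have ha0' : ((a : ℝ) : ℂ) ≠ 0 := by
        simp only [ne_eq, Complex.ofReal_eq_zero, Int.cast_eq_zero]
        exact ha0
      have haa : ((a : ℝ) : ℂ) * ((a : ℝ) : ℂ)⁻¹ = 1 := mul_inv_cancel₀ ha0'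
      have h4 : 1 / (2 * ((a : ℝ) : ℂ)) * ((a : ℂ) * (2 * (Real.pi : ℂ) * Complex.I))
          = (Real.pi : ℂ) * Complex.I := by
        push_cast at haa ⊢
        field_simp
      rw [h4, Complex.exp_pi_mul_I] at h3
      norm_num at h3
    have hcne : (fun i => (m i : ℝ) - (m' i : ℝ)) ≠ 0 := by
      intro hall
      apply hne
      ext i
      have := congrFun hall i
      simp only [Pi.zero_apply, sub_eq_zero] at this
      exact_mod_cast this
    apply stmt7_dim_lemma k V hdim htorus (fun i => (m i : ℝ) - (m' i : ℝ)) hcne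
    intro v hv
    have h5 := hzero ⟨v, hv⟩
    simp only [L] at h5
    rw [← Finset.sum_sub_distrib] at h5
    rw [← h5]
    apply Finset.sum_congr rfl
    intro i _
    push_cast
    ring
  have key : ∀ w : Multiplicative ↥V,
      ∑ m ∈ p.support, MvPolynomial.coeff m p * χ m w = 0 := by
    intro w
    have hv := hvanish (w.toAdd : Fin (2 * k + 1) → ℂ) (w.toAdd).2
    rw [MvPolynomial.eval_eq'] at hv
    rw [← hv]
    apply Finset.sum_congr rfl
    intro m _
    congr 1
    simp only [χ, MonoidHom.coe_mk, OneHom.coe_mk, L]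
    rw [Complex.exp_sum]
    refine Finset.prod_congr rfl fun i _ => ?_
    rw [Complex.exp_nat_mul]
  have hzerocoeff : ∀ m ∈ p.support, MvPolynomial.coeff m p = 0 := by
    intro m hm
    have hinjsub : Function.Injective (fun m : {x // x ∈ p.support} => χ m.1) := by
      intro a b hab
      exact Subtype.ext (hχinj a.1 a.2 b.1 b.2 hab)
    have hLI := (linearIndependent_monoidHom (Multiplicative ↥V) ℂ).comp
      (fun m : {x // x ∈ p.support} => χ m.1) hinjsub
    rw [Fintype.linearIndependent_iff] at hLI
    have hsum : ∑ m0 : {x // x ∈ p.support}, MvPolynomial.coeff m0.1 p •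
        ((fun f : Multiplicative ↥V →* ℂ => ⇑f) ∘ fun m1 : {x // x ∈ p.support} => χ m1.1) m0
        = 0 := by
      funext w
      simp only [Finset.sum_apply, Function.comp_apply, Pi.smul_apply, smul_eq_mul,
        Pi.zero_apply]
      rw [Finset.sum_coe_sort p.support (fun m0 => MvPolynomial.coeff m0 p * χ m0 w)]
      exact key w
    exact hLI _ hsum ⟨m, hm⟩
  intro x _
  rw [MvPolynomial.eval_eq']
  exact Finset.sum_eq_zero fun m hm => by rw [hzerocoeff m hm, zero_mul]
end

section
/- Let Λ : ℂ^{r+1} → (ℂ*)^{2r+1} be a Lie group morphism satisfying the transversality conditions rank A_Λ = 2r+1 and rank B_Λ = 2r. Then Λ restricted to {0} × ℂ^r is injective and the kernel of Λ has dimension 0. -/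
/-- The canonical real basis `e_1 = (1,0,…,0), e_2 = (i,0,…,0), …, e_{2n} = (0,…,0,i)`
of `ℂ^n ≅ ℝ^{2n}`: the `c`-th basis vector. -/
noncomputable def cbasis (n : ℕ) (c : Fin (2 * n)) : Fin n → ℂ := fun j =>
  if (c : ℕ) / 2 = (j : ℕ) then (if (c : ℕ) % 2 = 0 then 1 else Complex.I) else 0

/-- The real `(2r+1) × (2r+2)` matrix `A_Λ` of `Re ∘ Λ⁰` in the canonical real basis. -/
noncomputable def Amat (r : ℕ) (L : (Fin (r + 1) → ℂ) →ₗ[ℂ] (Fin (2 * r + 1) → ℂ)) :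
    Matrix (Fin (2 * r + 1)) (Fin (2 * (r + 1))) ℝ :=
  fun i c => (L (cbasis (r + 1) c) i).re

/-- The real `(2r+1) × 2r` matrix `B_Λ` obtained from `A_Λ` by deleting its first two
columns. -/
noncomputable def Bmat (r : ℕ) (L : (Fin (r + 1) → ℂ) →ₗ[ℂ] (Fin (2 * r + 1) → ℂ)) :
    Matrix (Fin (2 * r + 1)) (Fin (2 * r)) ℝ :=
  fun i c => Amat r L i ⟨(c : ℕ) + 2, by omega⟩

noncomputable def cvec (n : ℕ) (v : Fin (2 * n) → ℝ) : Fin n → ℂ :=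
  ∑ c, (v c : ℂ) • cbasis n c

noncomputable def rvec (n : ℕ) (z : Fin n → ℂ) : Fin (2 * n) → ℝ := fun c =>
  if (c : ℕ) % 2 = 0 then (z ⟨(c : ℕ) / 2, by omega⟩).re
  else (z ⟨(c : ℕ) / 2, by omega⟩).im

lemma cvec_rvec (n : ℕ) (z : Fin n → ℂ) : cvec n (rvec n z) = z := by
  funext j
  have hj2 : 2 * (j : ℕ) < 2 * n := by omega
  have hj21 : 2 * (j : ℕ) + 1 < 2 * n := by omega
  set a : Fin (2 * n) := ⟨2 * j, hj2⟩ with ha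
  set b : Fin (2 * n) := ⟨2 * j + 1, hj21⟩ with hb
  have hab : a ≠ b := by simp [ha, hb, Fin.ext_iff]
  have hsum : cvec n (rvec n z) j = ∑ c, ((rvec n z c : ℂ) * cbasis n c j) := by
    simp [cvec, Finset.sum_apply, Pi.smul_apply, smul_eq_mul]
  rw [hsum, ← Finset.sum_subset (Finset.subset_univ {a, b})]
  · rw [Finset.sum_pair hab]
    have h1 : ((rvec n z a : ℂ) * cbasis n a j) = ((z j).re : ℂ) := by
      simp [ha, rvec, cbasis, Nat.mul_div_cancel_left, Nat.mul_mod_right]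
    have h2 : ((rvec n z b : ℂ) * cbasis n b j) = ((z j).im : ℂ) * Complex.I := by
      have : (2 * (j : ℕ) + 1) / 2 = (j : ℕ) := by omega
      have h2' : (2 * (j : ℕ) + 1) % 2 = 1 := by omega
      simp [hb, rvec, cbasis, this, h2']
    rw [h1, h2, Complex.re_add_im]
  · intro c _ hc
    have hne : (c : ℕ) / 2 ≠ (j : ℕ) := by
      intro h
      apply hc
      have hcases : (c : ℕ) = 2 * j ∨ (c : ℕ) = 2 * j + 1 := by omega
      rcases hcases with h' | h'
      · exact Finset.mem_insert.2 (Or.inl (by simp [ha, Fin.ext_iff, h']))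
      · exact Finset.mem_insert.2 (Or.inr (by simp [hb, Fin.ext_iff, h']))
    simp [cbasis, hne]
lemma mulVec_Amat (r : ℕ) (L : (Fin (r + 1) → ℂ) →ₗ[ℂ] (Fin (2 * r + 1) → ℂ))
    (v : Fin (2 * (r + 1)) → ℝ) (i : Fin (2 * r + 1)) :
    (Amat r L).mulVec v i = (L (cvec (r + 1) v) i).re := by
  have h : L (cvec (r + 1) v) i = ∑ c, (v c : ℂ) * L (cbasis (r + 1) c) i := by
    simp [cvec, map_sum, Finset.sum_apply, smul_eq_mul]
  rw [h, Complex.re_sum]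
  simp only [Matrix.mulVec, dotProduct, Amat, Complex.re_ofReal_mul]
  exact Finset.sum_congr rfl fun c _ => mul_comm _ _

lemma cvec_zero (n : ℕ) : cvec n 0 = 0 := by simp [cvec]

lemma cvec_lin (n : ℕ) (s t : ℝ) (v w : Fin (2 * n) → ℝ) :
    cvec n (s • v + t • w) = (s : ℂ) • cvec n v + (t : ℂ) • cvec n w := by
  simp only [cvec, Finset.smul_sum, ← Finset.sum_add_distrib, smul_smul]
  refine Finset.sum_congr rfl fun c _ => ?_
  rw [← add_smul]
  norm_num [Pi.add_apply, Pi.smul_apply, smul_eq_mul]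

lemma Bker (r : ℕ) (L : (Fin (r + 1) → ℂ) →ₗ[ℂ] (Fin (2 * r + 1) → ℂ))
    (hB : (Bmat r L).rank = 2 * r) (w : Fin (2 * r) → ℝ)
    (hw : (Bmat r L).mulVec w = 0) : w = 0 := by
  have h1 := LinearMap.finrank_range_add_finrank_ker (Bmat r L).mulVecLin
  have hrk : (Bmat r L).rank
      = Module.finrank ℝ (LinearMap.range (Bmat r L).mulVecLin) := rfl
  have hdom : Module.finrank ℝ (Fin (2 * r) → ℝ) = 2 * r := by simp
  have hker : Module.finrank ℝ (LinearMap.ker (Bmat r L).mulVecLin) = 0 := by omega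
  have hbot : LinearMap.ker (Bmat r L).mulVecLin = ⊥ := Submodule.finrank_eq_zero.mp hker
  have hmem : w ∈ LinearMap.ker (Bmat r L).mulVecLin := by
    simpa [Matrix.mulVecLin_apply] using hw
  simpa [hbot] using hmem

lemma Aker (r : ℕ) (L : (Fin (r + 1) → ℂ) →ₗ[ℂ] (Fin (2 * r + 1) → ℂ))
    (hA : (Amat r L).rank = 2 * r + 1) (z : Fin (r + 1) → ℂ)
    (h1 : ∀ i, (L z i).re = 0) (h2 : ∀ i, (L (Complex.I • z) i).re = 0) : z = 0 := by
  by_contra hz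
  obtain ⟨j, hj⟩ : ∃ j, z j ≠ 0 := by
    by_contra h; push_neg at h; exact hz (funext h)
  set v1 := rvec (r + 1) z with hv1def
  set v2 := rvec (r + 1) (Complex.I • z) with hv2def
  have hv1 : (Amat r L).mulVecLin v1 = 0 := by
    funext i
    simp only [Matrix.mulVecLin_apply, Pi.zero_apply, mulVec_Amat, hv1def, cvec_rvec]
    exact h1 i
  have hv2 : (Amat r L).mulVecLin v2 = 0 := by
    funext i
    simp only [Matrix.mulVecLin_apply, Pi.zero_apply, mulVec_Amat, hv2def, cvec_rvec]
    exact h2 i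
  set K := LinearMap.ker (Amat r L).mulVecLin with hK
  have hw1 : v1 ∈ K := hv1
  have hw2 : v2 ∈ K := hv2
  have hind : LinearIndependent ℝ ![v1, v2] := by
    rw [LinearIndependent.pair_iff]
    intro s t hst
    have hc : cvec (r + 1) (s • v1 + t • v2)
        = (s : ℂ) • cvec (r + 1) v1 + (t : ℂ) • cvec (r + 1) v2 := cvec_lin _ s t v1 v2
    rw [hst, cvec_zero, hv1def, hv2def, cvec_rvec, cvec_rvec] at hc
    have hj' : ((s : ℂ) + (t : ℂ) * Complex.I) * z j = 0 := by
      have := congrFun hc.symm j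
      simp only [Pi.add_apply, Pi.smul_apply, Pi.zero_apply, smul_eq_mul] at this
      rw [← this]; ring
    have hst0 : (s : ℂ) + (t : ℂ) * Complex.I = 0 := by
      rcases mul_eq_zero.mp hj' with h | h
      · exact h
      · exact absurd h hj
    constructor
    · have := congrArg Complex.re hst0; simpa using this
    · have := congrArg Complex.im hst0; simpa using this
  have hind' : LinearIndependent ℝ ![(⟨v1, hw1⟩ : K), ⟨v2, hw2⟩] := by
    apply LinearIndependent.of_comp K.subtype
    convert hind using 1
    funext x
    fin_cases x <;> rfl
    rfl
  have hcard : 2 ≤ Module.finrank ℝ K := by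
    simpa using hind'.fintype_card_le_finrank
  have h1' := LinearMap.finrank_range_add_finrank_ker (Amat r L).mulVecLin
  have hrk : (Amat r L).rank
      = Module.finrank ℝ (LinearMap.range (Amat r L).mulVecLin) := rfl
  have hdom : Module.finrank ℝ (Fin (2 * (r + 1)) → ℝ) = 2 * (r + 1) := by simp
  rw [← hK] at h1'
  omega

/-- If `Λ = exp ∘ Λ⁰ : ℂ^{r+1} → (ℂ*)^{2r+1}` satisfies the transversality
conditions `rank A_Λ = 2r+1` and `rank B_Λ = 2r`, then `Λ` is injective on `{0} × ℂ^r`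
and the kernel of `Λ` has dimension `0` (it contains no real one-parameter subgroup). -/
theorem stmt11 (r : ℕ) (L : (Fin (r + 1) → ℂ) →ₗ[ℂ] (Fin (2 * r + 1) → ℂ))
    (hA : (Amat r L).rank = 2 * r + 1) (hB : (Bmat r L).rank = 2 * r) :
    Function.Injective
      (fun z : Fin r → ℂ => fun i : Fin (2 * r + 1) => Complex.exp (L (Fin.cons 0 z) i)) ∧
    (∀ z : Fin (r + 1) → ℂ,
      (∀ t : ℝ, ∀ i, Complex.exp (L (t • z) i) = 1) → z = 0) := by
  constructor
  · intro z1 z2 h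
    have h' : ∀ i, Complex.exp (L (Fin.cons 0 z1) i) = Complex.exp (L (Fin.cons 0 z2) i) :=
      fun i => congrFun h i
    set u : Fin (r + 1) → ℂ := Fin.cons 0 (z1 - z2) with hu
    have hcons : Fin.cons (0 : ℂ) z1 - Fin.cons 0 z2 = u := by
      funext j
      refine Fin.cases ?_ (fun j' => ?_) j <;> simp [hu]
    have hre : ∀ i, (L u i).re = 0 := by
      intro i
      have hone : Complex.exp (L u i) = 1 := by
        rw [← hcons, map_sub]
        have h2 := h' i
        simp only [Pi.sub_apply, Complex.exp_sub, h2]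
        exact div_self (Complex.exp_ne_zero _)
      obtain ⟨m, hm⟩ := Complex.exp_eq_one_iff.mp hone
      rw [hm]
      simp [Complex.mul_re]
    have hlow : ∀ c : Fin (2 * (r + 1)), (c : ℕ) < 2 → rvec (r + 1) u c = 0 := by
      intro c hc
      have h0 : (c : ℕ) / 2 = 0 := by omega
      have hu0 : u ⟨(c : ℕ) / 2, by omega⟩ = 0 := by
        have he0 : (⟨(c : ℕ) / 2, by omega⟩ : Fin (r + 1)) = 0 := by
          simp [Fin.ext_iff, h0]
        rw [he0, hu, Fin.cons_zero]
      simp [rvec, hu0]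
    set w : Fin (2 * r) → ℝ := fun c => rvec (r + 1) u ⟨(c : ℕ) + 2, by omega⟩ with hwdef
    set e : Fin (2 * r) → Fin (2 * (r + 1)) := fun c => ⟨(c : ℕ) + 2, by omega⟩ with he
    have hinj : Function.Injective e := by
      intro a b hab
      have := congrArg Fin.val hab
      simp only [he] at this
      exact Fin.ext (by omega)
    have himg : ∀ c : Fin (2 * (r + 1)), c ∉ Finset.univ.image e → (c : ℕ) < 2 := by
      intro c hc
      by_contra hge
      push_neg at hge
      exact hc (Finset.mem_image.2 ⟨⟨(c : ℕ) - 2, by omega⟩, Finset.mem_univ _,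
        Fin.ext (by simp [he]; omega)⟩)
    have hBw : (Bmat r L).mulVec w = 0 := by
      funext i
      have key : (Bmat r L).mulVec w i = (Amat r L).mulVec (rvec (r + 1) u) i := by
        calc (Bmat r L).mulVec w i
            = ∑ c : Fin (2 * r), Amat r L i (e c) * rvec (r + 1) u (e c) := by
              simp [Matrix.mulVec, dotProduct, Bmat, hwdef, he]
          _ = ∑ c ∈ Finset.univ.image e, Amat r L i c * rvec (r + 1) u c :=
              (Finset.sum_image (fun a _ b _ hab => hinj hab) :
                ∑ c ∈ Finset.univ.image e, Amat r L i c * rvec (r + 1) u c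
                  = ∑ c : Fin (2 * r), Amat r L i (e c) * rvec (r + 1) u (e c)).symm

          _ = ∑ c, Amat r L i c * rvec (r + 1) u c :=
              Finset.sum_subset (Finset.subset_univ _)
                (fun c _ hc => by rw [hlow c (himg c hc), mul_zero])
          _ = (Amat r L).mulVec (rvec (r + 1) u) i := rfl
      rw [key, mulVec_Amat, cvec_rvec]
      exact hre i
    have hw0 : w = 0 := Bker r L hB w hBw
    have hru : rvec (r + 1) u = 0 := by
      funext c
      by_cases hc : (c : ℕ) < 2
      · exact hlow c hc
      · have hcw : rvec (r + 1) u c = w ⟨(c : ℕ) - 2, by omega⟩ := by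
          rw [hwdef]
          congr 1
          exact Fin.ext (by simp; omega)
        rw [hcw, hw0]
        rfl
    have hu0 : u = 0 := by rw [← cvec_rvec (r + 1) u, hru, cvec_zero]
    have hsub : z1 - z2 = 0 := by
      funext j
      simpa [hu] using congrFun hu0 (Fin.succ j)
    exact sub_eq_zero.mp hsub
  · intro z hz
    have hL0 : ∀ i, L z i = 0 := by
      intro i
      have h1 : Complex.exp (L z i) = 1 := by simpa using hz 1 i
      obtain ⟨m, hm⟩ := Complex.exp_eq_one_iff.mp h1
      by_cases hm0 : m = 0
      · rw [hm, hm0]; simp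
      · exfalso
        set t : ℝ := (((2 * m : ℤ) : ℝ))⁻¹ with ht
        have h2 : Complex.exp (L (t • z) i) = 1 := hz t i
        have hsm : L (t • z) i = (t : ℂ) * L z i := by
          have hts : t • z = (t : ℂ) • z := by
            funext j
            simp [Complex.real_smul]
          rw [hts, map_smul]
          simp
        obtain ⟨k, hk⟩ := Complex.exp_eq_one_iff.mp h2
        rw [hsm, hm] at hk
        have h2pi : (2 * (Real.pi : ℂ) * Complex.I) ≠ 0 := by
          simp [Real.pi_ne_zero, Complex.I_ne_zero, Complex.ofReal_ne_zero]
        have hcan : (t : ℂ) * (m : ℂ) = (k : ℂ) := by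
          apply mul_right_cancel₀ h2pi
          rw [mul_assoc]
          exact hk
        have hm' : ((2 * m : ℤ) : ℝ) ≠ 0 := by
          exact_mod_cast (by omega : (2 * m : ℤ) ≠ 0)
        have htm : t * (m : ℝ) = 1 / 2 := by
          rw [ht, inv_mul_eq_div, div_eq_iff hm']
          push_cast
          ring
        have hk' : t * (m : ℝ) = (k : ℝ) := by exact_mod_cast hcan
        rw [htm] at hk'
        have h2k : (2 * k : ℤ) = 1 := by
          exact_mod_cast (by push_cast; linarith : ((2 * k : ℤ) : ℝ) = 1)
        omega
    refine Aker r L hA z (fun i => by rw [hL0 i]; simp) (fun i => ?_)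
    rw [map_smul]
    simp [hL0 i]
end

section
/- Let Λ : ℂ^{r+1} → (ℂ*)^{2r+1} be a Lie group morphism with rank B_Λ = 2r (B_Λ as above). Then the subgroup Λ({0} × ℂ^r) is a closed subgroup of (ℂ*)^{2r+1}. -/
open Topology

/-- cons-zero as an ℝ-linear map -/
noncomputable def consLin (r : ℕ) : (Fin r → ℂ) →ₗ[ℝ] (Fin (r + 1) → ℂ) where
  toFun z := Fin.cons 0 z
  map_add' a b := by
    funext j; refine Fin.cases ?_ ?_ j <;> simp
  map_smul' c z := by
    funext j; refine Fin.cases ?_ ?_ j <;> simp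

/-- The real-linear map `z ↦ (Re (L (0, z) i))_i`. -/
noncomputable def Tlin (r : ℕ) (L : (Fin (r + 1) → ℂ) →ₗ[ℂ] (Fin (2 * r + 1) → ℂ)) :
    (Fin r → ℂ) →ₗ[ℝ] (Fin (2 * r + 1) → ℝ) :=
  (LinearMap.pi fun i => Complex.reLm.comp (LinearMap.proj i)).comp
    ((L.restrictScalars ℝ).comp (consLin r))

lemma Tlin_apply (r : ℕ) (L : (Fin (r + 1) → ℂ) →ₗ[ℂ] (Fin (2 * r + 1) → ℂ))
    (z : Fin r → ℂ) (i : Fin (2 * r + 1)) :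
    Tlin r L z i = (L (Fin.cons 0 z) i).re := rfl

lemma cbasis_shift (r : ℕ) (c : Fin (2 * r)) :
    cbasis (r + 1) ⟨(c : ℕ) + 2, by omega⟩ = Fin.cons 0 (cbasis r c) := by
  funext j
  refine Fin.cases ?_ (fun j' => ?_) j
  · simp only [cbasis, Fin.cons_zero, Fin.val_zero]
    split_ifs with h
    · omega
    · exact if_neg h
  · simp only [cbasis, Fin.cons_succ, Fin.val_succ]
    have h1 : ((c : ℕ) + 2) / 2 = (c : ℕ) / 2 + 1 := by omega
    have h2 : ((c : ℕ) + 2) % 2 = (c : ℕ) % 2 := by omega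
    rw [h1, h2]
    by_cases h : (c : ℕ) / 2 = (j' : ℕ)
    · rw [if_pos (by omega), if_pos h]
    · rw [if_neg (by omega), if_neg h]

lemma Bmat_col (r : ℕ) (L : (Fin (r + 1) → ℂ) →ₗ[ℂ] (Fin (2 * r + 1) → ℂ))
    (i : Fin (2 * r + 1)) (c : Fin (2 * r)) :
    Bmat r L i c = Tlin r L (cbasis r c) i := by
  rw [Bmat, Amat, Tlin_apply, cbasis_shift]

lemma decompose (r : ℕ) (z : Fin r → ℂ) :
    ∃ v : Fin (2 * r) → ℝ, (∑ c, v c • cbasis r c) = z := by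
  refine ⟨fun c => if (c : ℕ) % 2 = 0 then (z ⟨(c : ℕ) / 2, by omega⟩).re
    else (z ⟨(c : ℕ) / 2, by omega⟩).im, ?_⟩
  funext j
  have hj1 : (2 * (j : ℕ) : ℕ) < 2 * r := by omega
  have hj2 : (2 * (j : ℕ) + 1 : ℕ) < 2 * r := by omega
  rw [Finset.sum_apply]
  rw [Finset.sum_eq_add_of_mem (⟨2 * (j : ℕ), hj1⟩ : Fin (2 * r)) ⟨2 * (j : ℕ) + 1, hj2⟩
    (Finset.mem_univ _) (Finset.mem_univ _) (by simp [Fin.ext_iff]) ?_]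
  · simp only [Pi.smul_apply, cbasis]
    have hm0 : 2 * (j:ℕ) % 2 = 0 := by omega
    have hm1 : (2 * (j:ℕ) + 1) % 2 = 1 := by omega
    have hd0 : 2 * (j:ℕ) / 2 = (j:ℕ) := by omega
    have hd1 : (2 * (j:ℕ) + 1) / 2 = (j:ℕ) := by omega
    simp only [hm0, hd0, hm1, hd1]
    simp [Complex.real_smul, Complex.re_add_im]
  · intro c _ ⟨hc1, hc2⟩
    have h1 : (c:ℕ) ≠ 2 * (j:ℕ) := fun h => hc1 (Fin.ext h)
    have h2 : (c:ℕ) ≠ 2 * (j:ℕ) + 1 := fun h => hc2 (Fin.ext h)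
    have h3 : (c:ℕ) / 2 ≠ (j:ℕ) := by omega
    simp [cbasis, h3]

lemma mulVec_eq (r : ℕ) (L : (Fin (r + 1) → ℂ) →ₗ[ℂ] (Fin (2 * r + 1) → ℂ))
    (v : Fin (2 * r) → ℝ) (i : Fin (2 * r + 1)) :
    (Bmat r L).mulVec v i = Tlin r L (∑ c, v c • cbasis r c) i := by
  rw [map_sum, Finset.sum_apply, Matrix.mulVec, dotProduct]
  refine Finset.sum_congr rfl fun c _ => ?_
  rw [map_smul, Pi.smul_apply, Bmat_col, smul_eq_mul, mul_comm]

lemma Tlin_inj (r : ℕ) (L : (Fin (r + 1) → ℂ) →ₗ[ℂ] (Fin (2 * r + 1) → ℂ))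
    (hB : (Bmat r L).rank = 2 * r) : Function.Injective (Tlin r L) := by
  have hMinj : Function.Injective (Bmat r L).mulVecLin := by
    rw [← LinearMap.ker_eq_bot]
    have h := (Bmat r L).mulVecLin.finrank_range_add_finrank_ker
    rw [Matrix.rank] at hB
    rw [hB] at h
    have hdom : Module.finrank ℝ (Fin (2 * r) → ℝ) = 2 * r := by simp
    rw [hdom] at h
    exact Submodule.finrank_eq_zero.mp (by omega)
  rw [← LinearMap.ker_eq_bot, LinearMap.ker_eq_bot']
  intro z hz
  obtain ⟨v, hv⟩ := decompose r z
  have hv0 : (Bmat r L).mulVecLin v = 0 := by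
    funext i
    rw [Matrix.mulVecLin_apply, mulVec_eq, hv, hz]
  have : v = 0 := hMinj (by rw [hv0, map_zero])
  rw [← hv, this]
  simp

/-- If `Λ = exp ∘ Λ⁰ : ℂ^{r+1} → (ℂ*)^{2r+1}` satisfies `rank B_Λ = 2r`,
then the subgroup `Λ({0} × ℂ^r)` is closed in `(ℂ*)^{2r+1}`. -/
theorem stmt12 (r : ℕ) (L : (Fin (r + 1) → ℂ) →ₗ[ℂ] (Fin (2 * r + 1) → ℂ))
    (hB : (Bmat r L).rank = 2 * r) :
    IsClosed (Set.range (fun z : Fin r → ℂ => fun i : Fin (2 * r + 1) =>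
      Units.mk0 (Complex.exp (L (Fin.cons 0 z) i)) (Complex.exp_ne_zero _)) :
      Set (Fin (2 * r + 1) → ℂˣ)) := by
  set F : (Fin r → ℂ) → (Fin (2 * r + 1) → ℂˣ) := fun z i =>
    Units.mk0 (Complex.exp (L (Fin.cons 0 z) i)) (Complex.exp_ne_zero _) with hFdef
  -- continuity of the linear inner map
  have hMcont : ∀ i : Fin (2 * r + 1), Continuous fun z : Fin r → ℂ => L (Fin.cons 0 z) i := by
    intro i
    exact ((LinearMap.proj i).comp ((L.restrictScalars ℝ).comp
      (consLin r))).continuous_of_finiteDimensional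
  have hFcont : Continuous F := by
    refine continuous_pi fun i => Units.continuous_iff.mpr ⟨?_, ?_⟩
    · exact Complex.continuous_exp.comp (hMcont i)
    · simp only [hFdef, Units.val_inv_eq_inv_val, Units.val_mk0, ← Complex.exp_neg]
      exact Complex.continuous_exp.comp (hMcont i).neg
  set Φ : (Fin (2 * r + 1) → ℂˣ) → (Fin (2 * r + 1) → ℝ) :=
    fun u i => Real.log ‖((u i : ℂ))‖ with hΦdef
  have hΦcont : Continuous Φ := by
    refine continuous_pi fun i => continuous_iff_continuousAt.mpr fun v => ?_
    exact (Real.continuousAt_log (by simp)).comp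
      ((continuous_norm.comp (Units.continuous_val.comp (continuous_apply i))).continuousAt)
  have key : ∀ z, Φ (F z) = Tlin r L z := by
    intro z
    funext i
    simp only [hΦdef, hFdef, Units.val_mk0, Complex.norm_exp,
      Real.log_exp, Tlin_apply]
  have hT : IsClosedEmbedding (Tlin r L) :=
    LinearMap.isClosedEmbedding_of_injective (LinearMap.ker_eq_bot.mpr (Tlin_inj r L hB))
  refine isClosed_of_closure_subset fun u hu => ?_
  set l := Filter.comap F (nhds u) with hl
  have hlne : l.NeBot := Filter.comap_neBot fun t ht => by
    obtain ⟨y, hyt, z, hz⟩ := mem_closure_iff_nhds.mp hu t ht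
    exact ⟨z, hz ▸ hyt⟩
  have hFl : Filter.Tendsto F l (nhds u) := Filter.tendsto_comap
  have h1 : Filter.Tendsto (fun z => Tlin r L z) l (nhds (Φ u)) := by
    have := (hΦcont.tendsto u).comp hFl
    simpa only [Function.comp_def, key] using this
  have h2 : Φ u ∈ Set.range (Tlin r L) :=
    hT.isClosed_range.mem_of_tendsto h1 (Filter.Eventually.of_forall fun z => ⟨z, rfl⟩)
  obtain ⟨z₀, hz₀⟩ := h2
  have h3 : Filter.Tendsto id l (nhds z₀) := by
    rw [hT.tendsto_nhds_iff]
    simpa [Function.comp_def, hz₀] using h1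
  have h4 : Filter.Tendsto F l (nhds (F z₀)) := (hFcont.tendsto z₀).comp h3
  exact ⟨z₀, tendsto_nhds_unique h4 hFl⟩
end

section
/- Let 𝔤_1, 𝔤_2 be real Lie algebras with complexifications 𝔤_i^ℂ, and suppose for i = 1,2 that 𝔩_i ⊆ 𝔩_i' = 𝔩_i ⊕ ⟨ξ_i⟩_ℂ are complex subalgebras of 𝔤_i^ℂ defining left-invariant nacs on compact Lie groups K_i (so 𝔩_i ∩ 𝔨_i = 0, ξ_i ∈ 𝔨_i, [𝔩_i, 𝔩_i'] ⊆ 𝔩_i, and 𝔤_i^ℂ = 𝔩_i ⊕ conj(𝔩_i) ⊕ ⟨ξ_i⟩_ℂ). Then 𝔩 := 𝔩_1 ⊕ 𝔩_2 ⊕ ⟨ξ_1 + i ξ_2⟩_ℂ is a complex subalgebra of 𝔤_1^ℂ ⊕ 𝔤_2^ℂ with 𝔩 ∩ (𝔨_1 ⊕ 𝔨_2) = 0, defining a left-invariant complex structure on K_1 × K_2. -/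
/-!
Since `ξᵢ` normalizes `𝔩ᵢ`, the bracket of two elements of `𝔩ᵢ ⊕ ⟨ξᵢ⟩_ℂ` already lies in
`𝔩ᵢ`, so brackets of elements of `𝔩` land in `𝔩₁ ⊕ 𝔩₂`. If `(a₁ + c ξ₁, a₂ + i c ξ₂)` with
`aᵢ ∈ 𝔩ᵢ` is fixed by `σ₁ × σ₂`, comparing it with its conjugate `(σ₁ a₁ + c̄ ξ₁, σ₂ a₂ - i c̄ ξ₂)`
in the unique decompositions `𝔤ᵢ^ℂ = 𝔩ᵢ ⊕ σᵢ(𝔩ᵢ) ⊕ ⟨ξᵢ⟩_ℂ` gives `aᵢ = 0` and both `c` and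
`i c` real, hence `c = 0`.
-/

theorem Submodule.mem_prod_sup_span_singleton {R M N : Type*} [CommRing R]
    [AddCommGroup M] [Module R M] [AddCommGroup N] [Module R N]
    {p : Submodule R M} {q : Submodule R N} {u : M} {v : N} {x : M × N} :
    x ∈ p.prod q ⊔ span R {(u, v)} ↔ ∃ a ∈ p, ∃ b ∈ q, ∃ c : R, x = (a + c • u, b + c • v) := by
  simp only [mem_sup, mem_prod, mem_span_singleton]
  constructor
  · rintro ⟨⟨a, b⟩, ⟨ha, hb⟩, _, ⟨c, rfl⟩, rfl⟩
    exact ⟨a, ha, b, hb, c, rfl⟩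
  · rintro ⟨a, ha, b, hb, c, rfl⟩
    exact ⟨(a, b), ⟨ha, hb⟩, c • (u, v), ⟨c, rfl⟩, rfl⟩

theorem LieSubalgebra.lie_add_smul_mem_of_lie_mem {R L : Type*} [CommRing R] [LieRing L]
    [LieAlgebra R L] (𝔩 : LieSubalgebra R L) {ξ : L} (hξ : ∀ x ∈ 𝔩, ⁅ξ, x⁆ ∈ 𝔩)
    {a b : L} (ha : a ∈ 𝔩) (hb : b ∈ 𝔩) (c d : R) :
    ⁅a + c • ξ, b + d • ξ⁆ ∈ 𝔩 := by
  have haξ : ⁅a, ξ⁆ ∈ 𝔩 := by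
    rw [← lie_skew]
    exact neg_mem (hξ a ha)
  simp only [add_lie, lie_add, smul_lie, lie_smul, lie_self, smul_zero, add_zero]
  exact add_mem (add_mem (𝔩.lie_mem ha hb) (𝔩.smul_mem _ (hξ b hb)))
    (𝔩.smul_mem _ haξ)

theorem eq_zero_and_conj_eq_of_map_add_smul_eq {V : Type*} [AddCommGroup V] [Module ℂ V]
    (σ : V →ₗ⋆[ℂ] V) (𝔩 : Submodule ℂ V) {ξ : V} (hξ : σ ξ = ξ)
    (hdec : ∀ x : V, ∃! t : 𝔩 × 𝔩 × ℂ, x = ↑t.1 + σ ↑t.2.1 + t.2.2 • ξ)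
    {a : V} (ha : a ∈ 𝔩) {c : ℂ} (hfix : σ (a + c • ξ) = a + c • ξ) :
    a = 0 ∧ starRingEnd ℂ c = c := by
  obtain ⟨_, _, huniq⟩ := hdec (a + c • ξ)
  have hself : a + c • ξ = ↑(⟨a, ha⟩ : 𝔩) + σ ↑(0 : 𝔩) + c • ξ := by simp
  have hconj : a + c • ξ = ↑(0 : 𝔩) + σ ↑(⟨a, ha⟩ : 𝔩) + starRingEnd ℂ c • ξ := by
    conv_lhs => rw [← hfix]
    simp [hξ]
  have h := (huniq (_, _, _) hself).trans (huniq (_, _, _) hconj).symm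
  simp only [Prod.mk.injEq] at h
  exact ⟨congrArg Subtype.val h.1, h.2.2.symm⟩

theorem Complex.eq_zero_of_conj_eq_of_conj_mul_I_eq {c : ℂ} (hc : starRingEnd ℂ c = c)
    (hcI : starRingEnd ℂ (c * I) = c * I) : c = 0 := by
  rw [map_mul, hc, conj_I] at hcI
  have hz : c * I = 0 := by linear_combination -hcI / 2
  simpa [I_ne_zero] using hz

theorem stmt17_general {g1 g2 : Type*}
    [LieRing g1] [LieAlgebra ℂ g1] [LieRing g2] [LieAlgebra ℂ g2]
    (σ1 : g1 → g1) (σ2 : g2 → g2)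
    (hadd1 : ∀ x y, σ1 (x + y) = σ1 x + σ1 y)
    (hsmul1 : ∀ (c : ℂ) (x : g1), σ1 (c • x) = (starRingEnd ℂ) c • σ1 x)
    (hadd2 : ∀ x y, σ2 (x + y) = σ2 x + σ2 y)
    (hsmul2 : ∀ (c : ℂ) (x : g2), σ2 (c • x) = (starRingEnd ℂ) c • σ2 x)
    (𝔩1 : LieSubalgebra ℂ g1) (𝔩2 : LieSubalgebra ℂ g2)
    (ξ1 : g1) (ξ2 : g2)
    -- ξᵢ ∈ 𝔨ᵢ
    (hξ1 : σ1 ξ1 = ξ1) (hξ2 : σ2 ξ2 = ξ2)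
    -- [𝔩ᵢ, 𝔩ᵢ'] ⊆ 𝔩ᵢ, i.e. 𝔩ᵢ is an ideal of 𝔩ᵢ' = 𝔩ᵢ ⊕ ⟨ξᵢ⟩_ℂ
    (hid1 : ∀ x ∈ 𝔩1, ⁅ξ1, x⁆ ∈ 𝔩1) (hid2 : ∀ x ∈ 𝔩2, ⁅ξ2, x⁆ ∈ 𝔩2)
    -- 𝔤ᵢ^ℂ = 𝔩ᵢ ⊕ conj(𝔩ᵢ) ⊕ ⟨ξᵢ⟩_ℂ
    (hdec1 : ∀ x : g1, ∃! t : 𝔩1 × 𝔩1 × ℂ, x = ↑t.1 + σ1 ↑t.2.1 + t.2.2 • ξ1)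
    (hdec2 : ∀ x : g2, ∃! t : 𝔩2 × 𝔩2 × ℂ, x = ↑t.1 + σ2 ↑t.2.1 + t.2.2 • ξ2) :
    ∃ 𝔩 : Submodule ℂ (g1 × g2),
      𝔩 = (𝔩1.toSubmodule.prod 𝔩2.toSubmodule) ⊔
            Submodule.span ℂ {(ξ1, Complex.I • ξ2)} ∧
      (∀ x ∈ 𝔩, ∀ y ∈ 𝔩, ((⁅Prod.fst x, Prod.fst y⁆ : g1),
        (⁅Prod.snd x, Prod.snd y⁆ : g2)) ∈ 𝔩) ∧
      (∀ x ∈ 𝔩, σ1 (Prod.fst x) = Prod.fst x → σ2 (Prod.snd x) = Prod.snd x →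
        x = (0 : g1 × g2)) := by
  let σ1' : g1 →ₗ⋆[ℂ] g1 := ⟨⟨σ1, hadd1⟩, hsmul1⟩
  let σ2' : g2 →ₗ⋆[ℂ] g2 := ⟨⟨σ2, hadd2⟩, hsmul2⟩
  refine ⟨_, rfl, ?_, ?_⟩
  · intro x hx y hy
    obtain ⟨a1, ha1, a2, ha2, c, rfl⟩ := Submodule.mem_prod_sup_span_singleton.mp hx
    obtain ⟨b1, hb1, b2, hb2, d, rfl⟩ := Submodule.mem_prod_sup_span_singleton.mp hy
    refine Submodule.mem_sup_left (Submodule.mem_prod.mpr ⟨?_, ?_⟩)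
    · exact 𝔩1.lie_add_smul_mem_of_lie_mem hid1 ha1 hb1 c d
    · simp only [smul_smul]
      exact 𝔩2.lie_add_smul_mem_of_lie_mem hid2 ha2 hb2 _ _
  · intro x hx hfix1 hfix2
    obtain ⟨a1, ha1, a2, ha2, c, rfl⟩ := Submodule.mem_prod_sup_span_singleton.mp hx
    rw [smul_smul] at hfix2
    obtain ⟨rfl, hc⟩ := eq_zero_and_conj_eq_of_map_add_smul_eq σ1' 𝔩1.toSubmodule hξ1 hdec1
      ha1 hfix1
    obtain ⟨rfl, hcI⟩ := eq_zero_and_conj_eq_of_map_add_smul_eq σ2' 𝔩2.toSubmodule hξ2 hdec2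
      ha2 hfix2
    simp [Complex.eq_zero_of_conj_eq_of_conj_mul_I_eq hc hcI]

/-- Let `𝔤ᵢ^ℂ` (i = 1,2) be the complexifications of the Lie algebras of
compact Lie groups `Kᵢ`, with conjugations `σᵢ` (fixed sets `𝔨ᵢ`), and suppose
`𝔩ᵢ ⊆ 𝔩ᵢ' = 𝔩ᵢ ⊕ ⟨ξᵢ⟩_ℂ` define left-invariant nacs on `Kᵢ`: so `𝔩ᵢ ∩ 𝔨ᵢ = 0`,
`ξᵢ ∈ 𝔨ᵢ`, `[𝔩ᵢ, 𝔩ᵢ'] ⊆ 𝔩ᵢ`, and `𝔤ᵢ^ℂ = 𝔩ᵢ ⊕ conj(𝔩ᵢ) ⊕ ⟨ξᵢ⟩_ℂ`. Then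
`𝔩 := 𝔩₁ ⊕ 𝔩₂ ⊕ ⟨ξ₁ + i ξ₂⟩_ℂ` is a complex Lie subalgebra of `𝔤₁^ℂ ⊕ 𝔤₂^ℂ`
(a subspace closed under the componentwise bracket) with `𝔩 ∩ (𝔨₁ ⊕ 𝔨₂) = 0`, hence
defines a left-invariant complex structure on `K₁ × K₂`. -/
theorem stmt17 {g1 g2 : Type*}
    [LieRing g1] [LieAlgebra ℂ g1] [LieRing g2] [LieAlgebra ℂ g2]
    (σ1 : g1 → g1) (σ2 : g2 → g2)
    (hadd1 : ∀ x y, σ1 (x + y) = σ1 x + σ1 y)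
    (hsmul1 : ∀ (c : ℂ) (x : g1), σ1 (c • x) = (starRingEnd ℂ) c • σ1 x)
    (hinv1 : ∀ x, σ1 (σ1 x) = x) (hbr1 : ∀ x y, σ1 ⁅x, y⁆ = ⁅σ1 x, σ1 y⁆)
    (hadd2 : ∀ x y, σ2 (x + y) = σ2 x + σ2 y)
    (hsmul2 : ∀ (c : ℂ) (x : g2), σ2 (c • x) = (starRingEnd ℂ) c • σ2 x)
    (hinv2 : ∀ x, σ2 (σ2 x) = x) (hbr2 : ∀ x y, σ2 ⁅x, y⁆ = ⁅σ2 x, σ2 y⁆)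
    (𝔩1 : LieSubalgebra ℂ g1) (𝔩2 : LieSubalgebra ℂ g2)
    (ξ1 : g1) (ξ2 : g2)
    -- ξᵢ ∈ 𝔨ᵢ
    (hξ1 : σ1 ξ1 = ξ1) (hξ2 : σ2 ξ2 = ξ2)
    -- 𝔩ᵢ ∩ 𝔨ᵢ = 0
    (h𝔩1𝔨 : ∀ x ∈ 𝔩1, σ1 x = x → x = 0) (h𝔩2𝔨 : ∀ x ∈ 𝔩2, σ2 x = x → x = 0)
    -- [𝔩ᵢ, 𝔩ᵢ'] ⊆ 𝔩ᵢ, i.e. 𝔩ᵢ is an ideal of 𝔩ᵢ' = 𝔩ᵢ ⊕ ⟨ξᵢ⟩_ℂ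
    (hid1 : ∀ x ∈ 𝔩1, ⁅ξ1, x⁆ ∈ 𝔩1) (hid2 : ∀ x ∈ 𝔩2, ⁅ξ2, x⁆ ∈ 𝔩2)
    -- 𝔤ᵢ^ℂ = 𝔩ᵢ ⊕ conj(𝔩ᵢ) ⊕ ⟨ξᵢ⟩_ℂ
    (hdec1 : ∀ x : g1, ∃! t : 𝔩1 × 𝔩1 × ℂ, x = ↑t.1 + σ1 ↑t.2.1 + t.2.2 • ξ1)
    (hdec2 : ∀ x : g2, ∃! t : 𝔩2 × 𝔩2 × ℂ, x = ↑t.1 + σ2 ↑t.2.1 + t.2.2 • ξ2) :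
    ∃ 𝔩 : Submodule ℂ (g1 × g2),
      𝔩 = (𝔩1.toSubmodule.prod 𝔩2.toSubmodule) ⊔
            Submodule.span ℂ {(ξ1, Complex.I • ξ2)} ∧
      (∀ x ∈ 𝔩, ∀ y ∈ 𝔩, ((⁅Prod.fst x, Prod.fst y⁆ : g1),
        (⁅Prod.snd x, Prod.snd y⁆ : g2)) ∈ 𝔩) ∧
      (∀ x ∈ 𝔩, σ1 (Prod.fst x) = Prod.fst x → σ2 (Prod.snd x) = Prod.snd x →
        x = (0 : g1 × g2)) :=
  stmt17_general σ1 σ2 hadd1 hsmul1 hadd2 hsmul2 𝔩1 𝔩2 ξ1 ξ2 hξ1 hξ2 hid1 hid2 hdec1 hdec2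
end
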